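/- arXiv:2311.01932 — 3 statements merged into one kernel-verified Lean document; each statement's English description precedes it below -/
import Mathlib

section
/- There are infinitely many matroids without loops and coloops for which the multiplicative Merino–Welsh inequality fails: for every natural number N there exists a matroid M on a finite ground set with more than N elements, having no loops and no coloops, such that T_M(2,0)·T_M(0,2) < T_M(1,1)^2. -/
open Set

/-- The rank of a set in a matroid: the largest cardinality of an independent subset. -/
noncomputable def matroidRk {α : Type*} (M : Matroid α) (S : Set α) : ℕ :=
  sSup {n : ℕ | ∃ I, M.Indep I ∧ I ⊆ S ∧ I.ncard = n}

/-- The Tutte polynomial of a matroid with finite ground set, evaluated at `(x, y)`. -/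
noncomputable def tutte {α : Type*} (M : Matroid α) (hE : M.E.Finite) (x y : ℝ) : ℝ :=
  ∑ S ∈ hE.toFinset.powerset,
    (x - 1) ^ (matroidRk M M.E - matroidRk M (S : Set α)) *
      (y - 1) ^ (S.card - matroidRk M (S : Set α))

/-- The uniform matroid of rank `r` on the ground set `Fin n`. -/
noncomputable def unif (n r : ℕ) : Matroid (Fin n) :=
  (IndepMatroid.ofFinite Set.finite_univ (fun I => I.ncard ≤ r)
    (by simp)
    (fun I J hJ hIJ => le_trans (Set.ncard_le_ncard hIJ J.toFinite) hJ)
    (fun I J _ hJ hIJ => by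
      obtain ⟨e, heJ, heI⟩ := Set.exists_mem_notMem_of_ncard_lt_ncard hIJ I.toFinite
      exact ⟨e, heJ, heI, le_trans (Set.ncard_insert_le e I)
        (le_trans (Nat.succ_le_of_lt hIJ) hJ)⟩)
    (fun I _ => Set.subset_univ I)).matroid

/-- The `k`-thickening of a matroid: each element is replaced by `k` parallel copies. -/
noncomputable def thicken {α : Type*} (M : Matroid α) (k : ℕ) : Matroid (α × Fin k) :=
  M.comap Prod.fst

theorem thicken_ground_finite {α : Type*} {M : Matroid α} (hE : M.E.Finite) (k : ℕ) :
    (thicken M k).E.Finite :=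
  (hE.prod Set.finite_univ).subset fun x hx => ⟨hx, trivial⟩

section MWAux

variable {n r : ℕ}

lemma unif_indep_iff {n r : ℕ} {I : Set (Fin n)} : (unif n r).Indep I ↔ I.ncard ≤ r := by
  simp [unif]

lemma thick_indep_iff {n r k : ℕ} {I : Set (Fin n × Fin k)} :
    (thicken (unif n r) k).Indep I ↔ (Prod.fst '' I).ncard ≤ r ∧ Set.InjOn Prod.fst I := by
  simp [thicken, unif, Matroid.comap_indep_iff]

/-- Rank of any set in the 2-thickening of a uniform matroid. -/
lemma rk_thick {n r : ℕ} (S : Set (Fin n × Fin 2)) :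
    matroidRk (thicken (unif n r) 2) S = min (Prod.fst '' S).ncard r := by
  apply IsGreatest.csSup_eq
  constructor
  · -- membership: construct an independent subset of the right size
    have hmin : min (Prod.fst '' S).ncard r ≤ (Prod.fst '' S).ncard := min_le_left _ _
    obtain ⟨D, hDsub, hDcard⟩ := Set.exists_subset_card_eq hmin
    have hchoice : ∀ x ∈ D, ∃ p : Fin n × Fin 2, p ∈ S ∧ p.1 = x := by
      intro x hx
      obtain ⟨p, hp, rfl⟩ := hDsub hx
      exact ⟨p, hp, rfl⟩
    choose g hg1 hg2 using hchoice
    classical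
    set gg : Fin n → Fin n × Fin 2 := fun x => if h : x ∈ D then g x h else (x, 0) with hgg
    have hgg2 : ∀ x ∈ D, (gg x).1 = x := by
      intro x hx; simp only [hgg, dif_pos hx]; exact hg2 x hx
    have hinj : Set.InjOn gg D := by
      intro a ha b hb hab
      have := congrArg Prod.fst hab
      rwa [hgg2 a ha, hgg2 b hb] at this
    refine ⟨gg '' D, ?_, ?_, ?_⟩
    · rw [thick_indep_iff]
      have himg : Prod.fst '' (gg '' D) = D := by
        rw [← Set.image_comp]
        apply Set.EqOn.image_eq_self
        intro x hx; exact hgg2 x hx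
      constructor
      · rw [himg, hDcard]; exact min_le_right _ _
      · intro a ha b hb hab
        obtain ⟨x, hx, rfl⟩ := ha
        obtain ⟨y, hy, rfl⟩ := hb
        rw [hgg2 x hx, hgg2 y hy] at hab
        rw [hab]
    · intro p hp
      obtain ⟨x, hx, rfl⟩ := hp
      simp only [hgg, dif_pos hx]
      exact hg1 x hx
    · rw [Set.ncard_image_of_injOn hinj, hDcard]
  · -- upper bound
    rintro m ⟨I, hI, hIS, rfl⟩
    rw [thick_indep_iff] at hI
    rw [← Set.ncard_image_of_injOn hI.2]
    exact le_min (Set.ncard_le_ncard (Set.image_mono hIS) ((Set.toFinite _))) hI.1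

lemma ground_eq : (thicken (unif n r) 2).E = Set.univ := by
  simp [thicken, unif, Matroid.comap_ground_eq]

lemma toFinset_ground (hE : (thicken (unif n r) 2).E.Finite) :
    hE.toFinset = Finset.univ := by
  ext p; simp [Set.Finite.mem_toFinset, ground_eq]

lemma rk_finset (S : Finset (Fin n × Fin 2)) :
    matroidRk (thicken (unif n r) 2) (S : Set (Fin n × Fin 2)) = min (S.image Prod.fst).card r := by
  rw [rk_thick, ← Finset.coe_image, Set.ncard_coe_finset]

lemma rk_ground (hnr : r ≤ n) :
    matroidRk (thicken (unif n r) 2) (thicken (unif n r) 2).E = r := by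
  rw [ground_eq, rk_thick]
  have : Prod.fst '' (Set.univ : Set (Fin n × Fin 2)) = Set.univ := by
    rw [Set.image_univ]
    exact Set.range_eq_univ.mpr Prod.fst_surjective
  rw [this, Set.ncard_univ]
  simp [hnr]

lemma T02_bound (hnr : r ≤ n) (hE : (thicken (unif n r) 2).E.Finite) :
    |tutte (thicken (unif n r) 2) hE 0 2| ≤ 2^(n*2) := by
  rw [tutte, toFinset_ground]
  calc |∑ S ∈ (Finset.univ : Finset (Fin n × Fin 2)).powerset,
        ((0:ℝ) - 1) ^ (matroidRk (thicken (unif n r) 2) (thicken (unif n r) 2).E -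
          matroidRk (thicken (unif n r) 2) (S : Set (Fin n × Fin 2))) *
        ((2:ℝ) - 1) ^ (S.card - matroidRk (thicken (unif n r) 2) (S : Set (Fin n × Fin 2)))|
      ≤ ∑ S ∈ (Finset.univ : Finset (Fin n × Fin 2)).powerset, 1 := by
        refine le_trans (Finset.abs_sum_le_sum_abs _ _) (Finset.sum_le_sum fun S _ => ?_)
        rw [abs_mul]
        norm_num
    _ = 2^(n*2) := by
        rw [Finset.sum_const, nsmul_eq_mul, mul_one, Finset.card_powerset, Finset.card_univ]
        norm_num [Fintype.card_prod]

/-- the injection from pairs (D, T) with D a r-subset of Fin n and T ⊆ D -/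
noncomputable def Phi (p : (_ : Finset (Fin n)) × Finset (Fin n)) : Finset (Fin n × Fin 2) :=
  p.1.image (fun a => (a, if a ∈ p.2 then 1 else 0))

lemma Phi_image_fst (p : (_ : Finset (Fin n)) × Finset (Fin n)) :
    (Phi p).image Prod.fst = p.1 := by
  rw [Phi, Finset.image_image]
  ext a; simp

lemma Phi_card (p : (_ : Finset (Fin n)) × Finset (Fin n)) : (Phi p).card = p.1.card := by
  rw [Phi, Finset.card_image_of_injOn]
  intro a _ b _ hab
  exact congrArg Prod.fst hab

lemma Phi_filter (p : (_ : Finset (Fin n)) × Finset (Fin n)) (hp : p.2 ⊆ p.1) :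
    ((Phi p).filter (fun q => q.2 = 1)).image Prod.fst = p.2 := by
  ext a
  simp only [Finset.mem_image, Finset.mem_filter, Phi]
  constructor
  · rintro ⟨q, ⟨hq, hq2⟩, rfl⟩
    obtain ⟨b, hb, rfl⟩ := hq
    by_contra hbT
    rw [if_neg hbT] at hq2
    simp at hq2
  · intro ha
    exact ⟨(a, 1), ⟨⟨a, hp ha, by rw [if_pos ha]⟩, rfl⟩, rfl⟩

lemma T11_lower (hnr : r ≤ n) (hE : (thicken (unif n r) 2).E.Finite) :
    (n.choose r * 2^r : ℝ) ≤ tutte (thicken (unif n r) 2) hE 1 1 := by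
  classical
  rw [tutte, toFinset_ground]
  set M := thicken (unif n r) 2
  set f : Finset (Fin n × Fin 2) → ℝ := fun S =>
    ((1:ℝ) - 1) ^ (matroidRk M M.E - matroidRk M (S : Set (Fin n × Fin 2))) *
      ((1:ℝ) - 1) ^ (S.card - matroidRk M (S : Set (Fin n × Fin 2))) with hf
  have hnonneg : ∀ S, 0 ≤ f S := by
    intro S
    apply mul_nonneg <;> · apply pow_nonneg; norm_num
  -- the domain of the injection
  set B : Finset ((_ : Finset (Fin n)) × Finset (Fin n)) :=
    (Finset.univ.powersetCard r).sigma (fun D => D.powerset) with hB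
  have hmem : ∀ p ∈ B, p.2 ⊆ p.1 ∧ p.1.card = r := by
    intro p hp
    rw [hB, Finset.mem_sigma] at hp
    exact ⟨Finset.mem_powerset.mp hp.2, (Finset.mem_powersetCard.mp hp.1).2⟩
  have hval : ∀ p ∈ B, f (Phi p) = 1 := by
    intro p hp
    have h1 : (Phi p).card = r := by rw [Phi_card]; exact (hmem p hp).2
    have h2 : matroidRk M ((Phi p) : Set (Fin n × Fin 2)) = r := by
      rw [rk_finset, Phi_image_fst, (hmem p hp).2, min_eq_left (le_refl r)]
    rw [hf]
    simp only [h1, h2, show matroidRk M M.E = r from rk_ground hnr, Nat.sub_self, pow_zero, mul_one]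
  have hinjPhi : Set.InjOn Phi (B : Set ((_ : Finset (Fin n)) × Finset (Fin n))) := by
    intro p hp q hq hpq
    have h1 : p.1 = q.1 := by rw [← Phi_image_fst p, ← Phi_image_fst q, hpq]
    have h2 : p.2 = q.2 := by
      rw [← Phi_filter p (hmem p hp).1, ← Phi_filter q (hmem q hq).1, hpq]
    exact Sigma.ext h1 (heq_of_eq h2)
  have hsub : B.image Phi ⊆ (Finset.univ : Finset (Fin n × Fin 2)).powerset := by
    intro S _
    exact Finset.mem_powerset.mpr (Finset.subset_univ _)
  have hcard : B.card = n.choose r * 2^r := by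
    rw [hB, Finset.card_sigma]
    have hh : ∀ D ∈ Finset.univ.powersetCard r (α := Fin n), (D.powerset).card = 2^r :=
      fun D hD => by rw [Finset.card_powerset, (Finset.mem_powersetCard.mp hD).2]
    rw [Finset.sum_congr rfl hh, Finset.sum_const, smul_eq_mul, Finset.card_powersetCard,
      Finset.card_univ, Fintype.card_fin]
  calc (n.choose r * 2^r : ℝ)
      = (B.card : ℝ) := by rw [hcard]; push_cast; ring
    _ = ∑ p ∈ B, f (Phi p) := by
        rw [Finset.sum_congr rfl hval, Finset.sum_const, nsmul_eq_mul, mul_one]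
    _ = ∑ S ∈ B.image Phi, f S := by
        rw [Finset.sum_image (fun x hx y hy h => hinjPhi hx hy h)]
    _ ≤ ∑ S ∈ (Finset.univ : Finset (Fin n × Fin 2)).powerset, f S :=
        Finset.sum_le_sum_of_subset_of_nonneg hsub (fun S _ _ => hnonneg S)

/-- the elements of `S` with second coordinate `0` -/
def Ffil (S : Finset (Fin n × Fin 2)) : Finset (Fin n × Fin 2) :=
  S.filter (fun p => p.2 = 0)

/-- the smallest first coordinate of an element of `S` with second coordinate `0` -/
noncomputable def a0 (hn : 0 < n) (S : Finset (Fin n × Fin 2)) : Fin n :=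
  if h : (Ffil S).Nonempty then ((Ffil S).image Prod.fst).min' (h.image _) else ⟨0, hn⟩

/-- toggle the element `(a0 S, 1)` -/
noncomputable def tog (hn : 0 < n) (S : Finset (Fin n × Fin 2)) : Finset (Fin n × Fin 2) :=
  if (a0 hn S, 1) ∈ S then S.erase (a0 hn S, 1) else insert (a0 hn S, 1) S

lemma a0_wit (hn : 0 < n) {S : Finset (Fin n × Fin 2)} (h : (Ffil S).Nonempty) :
    ∃ p ∈ S, p.2 = 0 ∧ p.1 = a0 hn S := by
  rw [a0, dif_pos h]
  have := Finset.min'_mem ((Ffil S).image Prod.fst) (h.image _)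
  obtain ⟨p, hp, hp1⟩ := Finset.mem_image.mp this
  rw [Ffil, Finset.mem_filter] at hp
  exact ⟨p, hp.1, hp.2, hp1⟩

lemma Ffil_tog (hn : 0 < n) (S : Finset (Fin n × Fin 2)) : Ffil (tog hn S) = Ffil S := by
  rw [tog]
  split_ifs with h
  · rw [Ffil, Finset.filter_erase, ← Ffil, Finset.erase_eq_of_notMem]
    rw [Ffil, Finset.mem_filter]
    rintro ⟨-, h2⟩
    simp at h2
  · rw [Ffil, Finset.filter_insert, if_neg (by simp), ← Ffil]

lemma a0_tog (hn : 0 < n) (S : Finset (Fin n × Fin 2)) : a0 hn (tog hn S) = a0 hn S := by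
  have h := Ffil_tog hn S
  simp only [a0, h]

lemma image_tog (hn : 0 < n) {S : Finset (Fin n × Fin 2)} (h : (Ffil S).Nonempty) :
    (tog hn S).image Prod.fst = S.image Prod.fst := by
  obtain ⟨p, hpS, hp2, hp1⟩ := a0_wit hn h
  rw [tog]
  split_ifs with hmem
  · apply subset_antisymm
    · exact Finset.image_subset_image (Finset.erase_subset _ _)
    · intro x hx
      obtain ⟨q, hq, rfl⟩ := Finset.mem_image.mp hx
      by_cases hq' : q = (a0 hn S, 1)
      · subst hq'
        exact Finset.mem_image.mpr ⟨p, Finset.mem_erase.mpr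
          ⟨by intro hc; rw [hc] at hp2; simp at hp2, hpS⟩, hp1⟩
      · exact Finset.mem_image.mpr ⟨q, Finset.mem_erase.mpr ⟨hq', hq⟩, rfl⟩
  · rw [Finset.image_insert]
    exact Finset.insert_eq_self.mpr (Finset.mem_image.mpr ⟨p, hpS, hp1⟩)

lemma tog_tog (hn : 0 < n) {S : Finset (Fin n × Fin 2)} (h : (Ffil S).Nonempty) :
    tog hn (tog hn S) = S := by
  by_cases hmem : (a0 hn S, 1) ∈ S
  · have h1 : tog hn S = S.erase (a0 hn S, 1) := by rw [tog, if_pos hmem]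
    have h2 : (a0 hn S, 1) ∉ tog hn S := h1 ▸ Finset.notMem_erase _ _
    rw [tog, a0_tog, if_neg h2, h1, Finset.insert_erase hmem]
  · have h1 : tog hn S = insert (a0 hn S, 1) S := by rw [tog, if_neg hmem]
    have h2 : (a0 hn S, 1) ∈ tog hn S := h1 ▸ Finset.mem_insert_self _ _
    rw [tog, a0_tog, if_pos h2, h1, Finset.erase_insert hmem]

lemma tog_mem_filter (hn : 0 < n) {S : Finset (Fin n × Fin 2)}
    (hS : S ∈ (Finset.univ.powerset.filter (fun S => ∃ p ∈ S, p.2 = (0 : Fin 2)))) :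
    tog hn S ∈ (Finset.univ.powerset.filter (fun S => ∃ p ∈ S, p.2 = (0 : Fin 2))) := by
  rw [Finset.mem_filter] at hS ⊢
  obtain ⟨-, p, hpS, hp2⟩ := hS
  have hne : (Ffil S).Nonempty := ⟨p, Finset.mem_filter.mpr ⟨hpS, hp2⟩⟩
  obtain ⟨p', hp'S, hp'2, hp'1⟩ := a0_wit hn hne
  refine ⟨Finset.mem_powerset.mpr (Finset.subset_univ _), p', ?_, hp'2⟩
  rw [tog]
  split_ifs with hmem
  · exact Finset.mem_erase.mpr ⟨by intro hc; rw [hc] at hp'2; simp at hp'2, hp'S⟩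
  · exact Finset.mem_insert_of_mem hp'S

lemma tog_card (hn : 0 < n) {S : Finset (Fin n × Fin 2)} :
    ((a0 hn S, 1) ∈ S → (tog hn S).card + 1 = S.card) ∧
    ((a0 hn S, 1) ∉ S → (tog hn S).card = S.card + 1) := by
  constructor
  · intro h; rw [tog, if_pos h, Finset.card_erase_of_mem h]
    have : 0 < S.card := Finset.card_pos.mpr ⟨_, h⟩
    omega
  · intro h; rw [tog, if_neg h, Finset.card_insert_of_notMem h]


lemma neg_one_pow_sub_succ {a b : ℕ} (h : b ≤ a) :
    (-1 : ℝ) ^ (a + 1 - b) = -(-1 : ℝ) ^ (a - b) := by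
  rw [show a + 1 - b = (a - b) + 1 by omega, pow_succ]
  ring

lemma T20_bound (hn : 0 < n) (hE : (thicken (unif n r) 2).E.Finite) :
    |tutte (thicken (unif n r) 2) hE 2 0| ≤ 2 ^ n := by
  classical
  set M := thicken (unif n r) 2 with hM
  set f : Finset (Fin n × Fin 2) → ℝ :=
    fun S => ((2:ℝ) - 1) ^ (matroidRk M M.E - matroidRk M (S : Set (Fin n × Fin 2))) *
      ((0:ℝ) - 1) ^ (S.card - matroidRk M (S : Set (Fin n × Fin 2))) with hf
  have hfeq : ∀ S : Finset (Fin n × Fin 2),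
      f S = (-1 : ℝ) ^ (S.card - matroidRk M (S : Set (Fin n × Fin 2))) := by
    intro S; rw [hf]; norm_num
  have habs : ∀ S : Finset (Fin n × Fin 2), |f S| = 1 := by
    intro S; rw [hfeq, abs_pow, abs_neg, abs_one, one_pow]
  have hrk_le : ∀ S : Finset (Fin n × Fin 2),
      matroidRk M (S : Set (Fin n × Fin 2)) ≤ (S.image Prod.fst).card := by
    intro S; rw [hM, rk_finset]; exact min_le_left _ _
  rw [tutte, toFinset_ground]
  have hsplit := Finset.sum_filter_add_sum_filter_not
    (Finset.univ : Finset (Fin n × Fin 2)).powerset (fun S => ∃ p ∈ S, p.2 = (0:Fin 2)) f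
  rw [← hsplit]
  -- the involution kills the first sum
  have hzero : ∑ S ∈ (Finset.univ : Finset (Fin n × Fin 2)).powerset.filter
      (fun S => ∃ p ∈ S, p.2 = (0:Fin 2)), f S = 0 := by
    apply Finset.sum_involution (fun S _ => tog hn S)
    · -- f S + f (tog S) = 0
      intro S hS
      have hne : (Ffil S).Nonempty := by
        obtain ⟨-, p, hp, hp2⟩ := Finset.mem_filter.mp hS
        exact ⟨p, Finset.mem_filter.mpr ⟨hp, hp2⟩⟩
      have himg : (tog hn S).image Prod.fst = S.image Prod.fst := image_tog hn hne
      have hrkeq : matroidRk M ((tog hn S : Finset (Fin n × Fin 2)) : Set (Fin n × Fin 2)) =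
          matroidRk M (S : Set (Fin n × Fin 2)) := by
        rw [hM, rk_finset, rk_finset, himg]
      by_cases hmem : (a0 hn S, 1) ∈ S
      · have hc : (tog hn S).card + 1 = S.card := (tog_card hn).1 hmem
        have hle : matroidRk M ((tog hn S : Finset (Fin n × Fin 2)) : Set (Fin n × Fin 2)) ≤
            (tog hn S).card := le_trans (hrk_le _) (le_trans (Finset.card_image_le) le_rfl)
        rw [hfeq, hfeq, hrkeq, ← hc, neg_one_pow_sub_succ (hrkeq ▸ hle)]
        ring
      · have hc : (tog hn S).card = S.card + 1 := (tog_card hn).2 hmem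
        have hle : matroidRk M (S : Set (Fin n × Fin 2)) ≤ S.card :=
          le_trans (hrk_le _) Finset.card_image_le
        rw [hfeq, hfeq, hrkeq, hc, neg_one_pow_sub_succ hle]
        ring
    · -- tog S ≠ S
      intro S hS hfS
      by_cases hmem : (a0 hn S, 1) ∈ S
      · rw [tog, if_pos hmem]
        have hne := Finset.notMem_erase (a0 hn S, 1) S
        intro hc
        rw [hc] at hne
        exact hne hmem
      · rw [tog, if_neg hmem]
        have hme := Finset.mem_insert_self (a0 hn S, 1) S
        intro hc
        rw [hc] at hme
        exact hmem hme
    · -- tog S stays in the filter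
      intro S hS
      exact tog_mem_filter hn hS
    · -- involutive
      intro S hS
      have hne : (Ffil S).Nonempty := by
        obtain ⟨-, p, hp, hp2⟩ := Finset.mem_filter.mp hS
        exact ⟨p, Finset.mem_filter.mpr ⟨hp, hp2⟩⟩
      exact tog_tog hn hne
  rw [hzero, zero_add]
  -- bound the remaining sum
  have hcard : ((Finset.univ : Finset (Fin n × Fin 2)).powerset.filter
      (fun S => ¬ ∃ p ∈ S, p.2 = (0:Fin 2))).card ≤ 2 ^ n := by
    have hinj : Set.InjOn (fun S : Finset (Fin n × Fin 2) => S.image Prod.fst)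
        ((Finset.univ : Finset (Fin n × Fin 2)).powerset.filter
          (fun S => ¬ ∃ p ∈ S, p.2 = (0:Fin 2))) := by
      intro S hS T hT hST
      have hrec : ∀ U ∈ (Finset.univ : Finset (Fin n × Fin 2)).powerset.filter
          (fun S => ¬ ∃ p ∈ S, p.2 = (0:Fin 2)),
          U = (U.image Prod.fst).image (fun a => (a, (1 : Fin 2))) := by
        intro U hU
        obtain ⟨-, hU2⟩ := Finset.mem_filter.mp hU
        push_neg at hU2
        ext ⟨a, b⟩
        simp only [Finset.mem_image]
        constructor
        · intro hab
          have hb0 := hU2 (a, b) hab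
          have hb : b = 1 := by
            fin_cases b
            · exact absurd rfl hb0
            · rfl
          exact ⟨a, ⟨(a, b), hab, rfl⟩, by rw [hb]⟩
        · rintro ⟨x, ⟨⟨c, d⟩, hcd, rfl⟩, heq⟩
          have hd0 := hU2 (c, d) hcd
          have hd : d = 1 := by
            fin_cases d
            · exact absurd rfl hd0
            · rfl
          have hcd1 : ((c, d) : Fin n × Fin 2) = (c, 1) := by rw [hd]
          rw [← heq, ← hcd1]
          exact hcd
      have hST' : S.image Prod.fst = T.image Prod.fst := hST
      rw [hrec S hS, hrec T hT, hST']
    calc ((Finset.univ : Finset (Fin n × Fin 2)).powerset.filter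
        (fun S => ¬ ∃ p ∈ S, p.2 = (0:Fin 2))).card
        ≤ (Finset.univ : Finset (Fin n)).powerset.card := by
          apply Finset.card_le_card_of_injOn (fun S => S.image Prod.fst)
          · intro S _
            exact Finset.mem_powerset.mpr (Finset.subset_univ _)
          · exact hinj
      _ = 2 ^ n := by rw [Finset.card_powerset, Finset.card_univ, Fintype.card_fin]
  set R := (Finset.univ : Finset (Fin n × Fin 2)).powerset.filter
      (fun S => ¬ ∃ p ∈ S, p.2 = (0:Fin 2)) with hR
  calc |∑ S ∈ R, f S|
      ≤ ∑ S ∈ R, |f S| := Finset.abs_sum_le_sum_abs _ _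
    _ = ∑ _S ∈ R, (1:ℝ) := Finset.sum_congr rfl (fun S _ => habs S)
    _ ≤ 2 ^ n := by
        rw [Finset.sum_const, nsmul_eq_mul, mul_one]
        exact_mod_cast hcard

lemma no_loops (hr : 1 ≤ r) (e : Fin n × Fin 2) :
    matroidRk (thicken (unif n r) 2) {e} ≠ 0 := by
  rw [rk_thick, Set.image_singleton, Set.ncard_singleton]
  omega

lemma no_coloops (hr : 1 ≤ r) (hrn : r < n) (e : Fin n × Fin 2) :
    ¬ (∀ B, (thicken (unif n r) 2).IsBase B → e ∈ B) := by
  classical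
  intro hall
  -- construct a base avoiding e
  have hcard : r ≤ ((Finset.univ : Finset (Fin n)).erase e.1).card := by
    rw [Finset.card_erase_of_mem (Finset.mem_univ _), Finset.card_univ, Fintype.card_fin]
    omega
  obtain ⟨D, hDsub, hDcard⟩ := Finset.exists_subset_card_eq hcard
  set B : Set (Fin n × Fin 2) := (fun a => (a, (0 : Fin 2))) '' (D : Set (Fin n)) with hB
  have hinj : Set.InjOn (fun a => (a, (0 : Fin 2))) (D : Set (Fin n)) := by
    intro a _ b _ hab
    exact congrArg Prod.fst hab
  have himg : Prod.fst '' B = (D : Set (Fin n)) := by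
    rw [hB, ← Set.image_comp]
    apply Set.EqOn.image_eq_self
    intro x _; rfl
  have hBcard : B.ncard = r := by
    rw [hB, Set.ncard_image_of_injOn hinj, Set.ncard_coe_finset, hDcard]
  have hBindep : (thicken (unif n r) 2).Indep B := by
    rw [thick_indep_iff, himg]
    constructor
    · rw [Set.ncard_coe_finset, hDcard]
    · intro p hp q hq hpq
      obtain ⟨a, _, rfl⟩ := hp
      obtain ⟨b, _, rfl⟩ := hq
      rw [show a = b from hpq]
  have hBbase : (thicken (unif n r) 2).IsBase B := by
    rw [Matroid.isBase_iff_maximal_indep]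
    constructor
    · exact hBindep
    · intro J hJ hBJ
      have hJcard : J.ncard ≤ r := by
        rw [thick_indep_iff] at hJ
        calc J.ncard = (Prod.fst '' J).ncard := (Set.ncard_image_of_injOn hJ.2).symm
          _ ≤ r := hJ.1
      exact (Set.eq_of_subset_of_ncard_le hBJ (hBcard ▸ hJcard) (Set.toFinite J)).symm.subset
  have heB := hall B hBbase
  rw [hB] at heB
  obtain ⟨a, haD, hae⟩ := heB
  have ha : a = e.1 := congrArg Prod.fst hae
  rw [ha] at haD
  exact Finset.notMem_erase e.1 _ (hDsub haD)

end MWAux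

lemma choose_step (j : ℕ) :
    (3*j+3).choose (2*j+2) * ((2*j+1)*(2*j+2)*(j+1)) =
      (3*j).choose (2*j) * ((3*j+1)*(3*j+2)*(3*j+3)) := by
  have h1 : (3*j+1) * (3*j).choose (2*j) = (3*j+1).choose (2*j+1) * (2*j+1) :=
    Nat.add_one_mul_choose_eq (3*j) (2*j)
  have h2 : (3*j+2) * (3*j+1).choose (2*j+1) = (3*j+2).choose (2*j+2) * (2*j+2) :=
    Nat.add_one_mul_choose_eq (3*j+1) (2*j+1)
  have h3 : (3*j+2).choose (2*j+2) * (3*j+3) = (3*j+3).choose (2*j+2) * (3*j+3 - (2*j+2)) := by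
    rw [← Nat.choose_mul_succ_eq (3*j+2) (2*j+2)]
  have h4 : 3*j+3 - (2*j+2) = j+1 := by omega
  rw [h4] at h3
  symm
  calc (3*j).choose (2*j) * ((3*j+1)*(3*j+2)*(3*j+3))
      = ((3*j+1) * (3*j).choose (2*j)) * ((3*j+2)*(3*j+3)) := by ring
    _ = ((3*j+1).choose (2*j+1) * (2*j+1)) * ((3*j+2)*(3*j+3)) := by rw [h1]
    _ = ((3*j+2) * (3*j+1).choose (2*j+1)) * ((2*j+1)*(3*j+3)) := by ring
    _ = ((3*j+2).choose (2*j+2) * (2*j+2)) * ((2*j+1)*(3*j+3)) := by rw [h2]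
    _ = ((3*j+2).choose (2*j+2) * (3*j+3)) * ((2*j+1)*(2*j+2)) := by ring
    _ = ((3*j+3).choose (2*j+2) * (j+1)) * ((2*j+1)*(2*j+2)) := by rw [h3]
    _ = (3*j+3).choose (2*j+2) * ((2*j+1)*(2*j+2)*(j+1)) := by ring

lemma numeric1 : ∀ j : ℕ, 27^j ≤ (3*j).choose (2*j) * 4^j * (3*j+1) := by
  intro j
  induction j with
  | zero => simp
  | succ j ih =>
    have hstep : 27 * ((3*j).choose (2*j) * (3*j+1)) ≤ 4 * ((3*j+3).choose (2*j+2) * (3*j+4)) := by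
      have key := choose_step j
      refine Nat.le_of_mul_le_mul_right ?_ (show 0 < (3*j+2)*(3*j+3) by positivity)
      calc 27 * ((3*j).choose (2*j) * (3*j+1)) * ((3*j+2)*(3*j+3))
          = 27 * ((3*j).choose (2*j) * ((3*j+1)*(3*j+2)*(3*j+3))) := by ring
        _ = 27 * ((3*j+3).choose (2*j+2) * ((2*j+1)*(2*j+2)*(j+1))) := by rw [← key]
        _ = (3*j+3).choose (2*j+2) * (27 * ((2*j+1)*(2*j+2)*(j+1))) := by ring
        _ ≤ (3*j+3).choose (2*j+2) * (4 * ((3*j+4) * ((3*j+2)*(3*j+3)))) := by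
            refine Nat.mul_le_mul_left _ ?_
            nlinarith
        _ = 4 * ((3*j+3).choose (2*j+2) * (3*j+4)) * ((3*j+2)*(3*j+3)) := by ring
    calc 27^(j+1) = 27 * 27^j := by ring
      _ ≤ 27 * ((3*j).choose (2*j) * 4^j * (3*j+1)) := Nat.mul_le_mul_left _ ih
      _ = (27 * ((3*j).choose (2*j) * (3*j+1))) * 4^j := by ring
      _ ≤ (4 * ((3*j+3).choose (2*j+2) * (3*j+4))) * 4^j := Nat.mul_le_mul_right _ hstep
      _ = (3*(j+1)).choose (2*(j+1)) * 4^(j+1) * (3*(j+1)+1) := by ring_nf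

lemma numeric2 : ∀ j : ℕ, 25 ≤ j → 512^j * (3*j+1)^2 < 729^j := by
  intro j hj
  induction j with
  | zero => omega
  | succ j ih =>
    rcases Nat.lt_or_ge j 25 with h | h
    · have hj25 : j = 24 := by omega
      subst hj25
      norm_num
    · have ihh := ih h
      have hstep : 512 * (3*(j+1)+1)^2 ≤ 729 * (3*j+1)^2 := by nlinarith
      calc 512^(j+1) * (3*(j+1)+1)^2 = 512^j * (512 * (3*(j+1)+1)^2) := by ring
        _ ≤ 512^j * (729 * (3*j+1)^2) := Nat.mul_le_mul_left _ hstep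
        _ = 729 * (512^j * (3*j+1)^2) := by ring
        _ < 729 * 729^j := mul_lt_mul_of_pos_left ihh (by norm_num)
        _ = 729^(j+1) := by ring

set_option maxHeartbeats 1000000 in
/-- There are infinitely many matroids without loops and coloops for which the
multiplicative Merino--Welsh inequality `T_M(2,0) * T_M(0,2) ≥ T_M(1,1)^2` fails. -/
theorem merino_welsh_multiplicative_false :
    ∀ N : ℕ, ∃ (α : Type) (M : Matroid α) (hE : M.E.Finite),
      N < hE.toFinset.card ∧
      (∀ e ∈ M.E, matroidRk M {e} ≠ 0) ∧
      (∀ e ∈ M.E, ¬ (∀ B, M.IsBase B → e ∈ B)) ∧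
      tutte M hE 2 0 * tutte M hE 0 2 < tutte M hE 1 1 ^ 2 := by
  intro N
  set j : ℕ := N + 25 with hj
  have hj25 : 25 ≤ j := by omega
  have hr1 : 1 ≤ 2 * j := by omega
  have hrn : 2 * j < 3 * j := by omega
  have hnr : 2 * j ≤ 3 * j := by omega
  have hn : 0 < 3 * j := by omega
  refine ⟨Fin (3 * j) × Fin 2, thicken (unif (3 * j) (2 * j)) 2, Set.toFinite _, ?_, ?_, ?_, ?_⟩
  · rw [toFinset_ground, Finset.card_univ, Fintype.card_prod, Fintype.card_fin, Fintype.card_fin]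
    omega
  · intro e _
    exact no_loops hr1 e
  · intro e _
    exact no_coloops hr1 hrn e
  · -- the Merino–Welsh inequality fails
    set hE : (thicken (unif (3 * j) (2 * j)) 2).E.Finite := Set.toFinite _
    have h20 := T20_bound (r := 2 * j) hn hE
    have h02 := T02_bound (n := 3 * j) (r := 2 * j) hnr hE
    have h11 := T11_lower hnr hE
    -- natural-number key inequality
    have hkey : 512 ^ j < ((3 * j).choose (2 * j) * 2 ^ (2 * j)) ^ 2 := by
      have h4 : (4 : ℕ) ^ j = 2 ^ (2 * j) := by
        rw [show (4 : ℕ) = 2 ^ 2 by norm_num, ← pow_mul]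
      have e1 : ((3 * j).choose (2 * j) * 2 ^ (2 * j)) ^ 2 * (3 * j + 1) ^ 2 =
          ((3 * j).choose (2 * j) * 4 ^ j * (3 * j + 1)) ^ 2 := by
        rw [h4]; ring
      have e2 : (729 : ℕ) ^ j = (27 ^ j) ^ 2 := by
        rw [show (729 : ℕ) = 27 ^ 2 by norm_num, ← pow_mul, mul_comm 2 j, pow_mul]
      have h729 : 729 ^ j ≤ ((3 * j).choose (2 * j) * 2 ^ (2 * j)) ^ 2 * (3 * j + 1) ^ 2 := by
        rw [e1, e2]
        exact Nat.pow_le_pow_left (numeric1 j) 2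
      have hlt := lt_of_lt_of_le (numeric2 j hj25) h729
      exact Nat.lt_of_mul_lt_mul_right hlt
    calc tutte (thicken (unif (3 * j) (2 * j)) 2) hE 2 0 *
          tutte (thicken (unif (3 * j) (2 * j)) 2) hE 0 2
        ≤ |tutte (thicken (unif (3 * j) (2 * j)) 2) hE 2 0 *
            tutte (thicken (unif (3 * j) (2 * j)) 2) hE 0 2| := le_abs_self _
      _ = |tutte (thicken (unif (3 * j) (2 * j)) 2) hE 2 0| *
            |tutte (thicken (unif (3 * j) (2 * j)) 2) hE 0 2| := abs_mul _ _
      _ ≤ 2 ^ (3 * j) * 2 ^ (3 * j * 2) := by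
          apply mul_le_mul h20 h02 (abs_nonneg _)
          positivity
      _ = ((512 ^ j : ℕ) : ℝ) := by
          push_cast
          rw [← pow_add, show 3 * j + 3 * j * 2 = 9 * j by ring,
            show (512 : ℝ) = 2 ^ 9 by norm_num, ← pow_mul]
      _ < ((((3 * j).choose (2 * j) * 2 ^ (2 * j)) ^ 2 : ℕ) : ℝ) := by
          exact_mod_cast hkey
      _ = (((3 * j).choose (2 * j) * 2 ^ (2 * j) : ℕ) : ℝ) ^ 2 := by push_cast; ring
      _ ≤ tutte (thicken (unif (3 * j) (2 * j)) 2) hE 1 1 ^ 2 := by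
          have h11' : ((((3 * j).choose (2 * j) * 2 ^ (2 * j)) : ℕ) : ℝ) ≤
              tutte (thicken (unif (3 * j) (2 * j)) 2) hE 1 1 := by
            push_cast
            exact h11
          exact pow_le_pow_left₀ (Nat.cast_nonneg _) h11' 2
end

section
/- Let M be a matroid with finite ground set and rank r(M), let k ≥ 1 be an integer, and let M^{(k)} be its k-thickening. Then for all real x and y with y^{k−1} + y^{k−2} + ⋯ + y + 1 ≠ 0, T_{M^{(k)}}(x,y) = (y^{k−1} + y^{k−2} + ⋯ + y + 1)^{r(M)} · T_M( (y^{k−1} + y^{k−2} + ⋯ + y + x) / (y^{k−1} + y^{k−2} + ⋯ + y + 1), y^k ). -/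
open Set

section Aux

open Finset in
private lemma tutte_binlemma {γ : Type*} [DecidableEq γ] (u : Finset γ) (z : ℝ) :
    ∑ T ∈ u.powerset, z ^ T.card = (z + 1) ^ u.card := by
  induction u using Finset.induction_on with
  | empty => simp
  | insert a u ha ih =>
    rw [Finset.sum_powerset_insert ha]
    have h2 : ∑ T ∈ u.powerset, z ^ (insert a T).card = ∑ T ∈ u.powerset, z * z ^ T.card := by
      apply Finset.sum_congr rfl
      intro T hT
      rw [Finset.card_insert_of_notMem (fun h => ha (Finset.mem_powerset.1 hT h)), pow_succ]
      ring
    rw [h2, ← Finset.mul_sum, ih, Finset.card_insert_of_notMem ha, pow_succ]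
    ring

private lemma tutte_geomlemma {γ : Type*} [DecidableEq γ] (u : Finset γ) (y : ℝ) :
    ∑ T ∈ u.powerset.erase ∅, (y - 1) ^ (T.card - 1) = ∑ i ∈ Finset.range u.card, y ^ i := by
  have key : ∀ u : Finset γ, ∑ T ∈ u.powerset, (y - 1) ^ (T.card - 1)
      = 1 + ∑ i ∈ Finset.range u.card, y ^ i := by
    intro u
    induction u using Finset.induction_on with
    | empty => simp
    | insert a u ha ih =>
      rw [Finset.sum_powerset_insert ha, ih]
      have h2 : ∑ T ∈ u.powerset, (y - 1) ^ ((insert a T).card - 1)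
          = ∑ T ∈ u.powerset, (y - 1) ^ T.card := by
        apply Finset.sum_congr rfl
        intro T hT
        rw [Finset.card_insert_of_notMem (fun h => ha (Finset.mem_powerset.1 hT h))]
        simp
      rw [h2, tutte_binlemma, Finset.card_insert_of_notMem ha, Finset.sum_range_succ]
      ring
  have h0 : (∅ : Finset γ) ∈ u.powerset := Finset.mem_powerset.2 (Finset.empty_subset u)
  have h1 := Finset.add_sum_erase _ (fun T : Finset γ => (y - 1) ^ (T.card - 1)) h0
  have hkey := key u
  rw [← h1] at hkey
  simp only [Finset.card_empty, Nat.zero_sub, pow_zero] at hkey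
  linarith

private lemma tutte_keysum {α : Type*} [DecidableEq α] (k : ℕ) (y : ℝ) (A : Finset α) :
    ∑ S ∈ (A ×ˢ (Finset.univ : Finset (Fin k))).powerset.filter
        (fun S => S.image Prod.fst = A), (y - 1) ^ (S.card - A.card)
    = (∑ T ∈ (Finset.univ : Finset (Fin k)).powerset.erase ∅,
        (y - 1) ^ (T.card - 1)) ^ A.card := by
  induction A using Finset.induction_on with
  | empty =>
    rw [Finset.empty_product, Finset.powerset_empty]
    simp [Finset.filter_singleton]
  | insert a A ha ih =>
    rw [Finset.card_insert_of_notMem ha, pow_succ', ← ih, Finset.sum_mul_sum,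
      ← Finset.sum_product']
    apply Finset.sum_nbij'
      (i := fun S => ((S.filter (fun p => p.1 = a)).image Prod.snd,
        S.filter (fun p => p.1 ≠ a)))
      (j := fun p => (({a} : Finset α) ×ˢ p.1) ∪ p.2)
    · -- hi : maps to
      intro S hS
      rw [Finset.mem_filter, Finset.mem_powerset] at hS
      obtain ⟨hS1, hS2⟩ := hS
      have hfst : ∀ p ∈ S, p.1 ∈ insert a A := by
        intro p hp
        exact (Finset.mem_product.1 (hS1 hp)).1
      rw [Finset.mem_product]
      constructor
      · rw [Finset.mem_erase]
        refine ⟨?_, Finset.mem_powerset.2 (Finset.subset_univ _)⟩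
        have : a ∈ S.image Prod.fst := hS2 ▸ Finset.mem_insert_self a A
        obtain ⟨p, hp, hpa⟩ := Finset.mem_image.1 this
        have : p.2 ∈ (S.filter (fun p => p.1 = a)).image Prod.snd :=
          Finset.mem_image.2 ⟨p, Finset.mem_filter.2 ⟨hp, hpa⟩, rfl⟩
        exact Finset.ne_empty_of_mem this
      · rw [Finset.mem_filter, Finset.mem_powerset]
        constructor
        · intro p hp
          rw [Finset.mem_filter] at hp
          rw [Finset.mem_product]
          refine ⟨?_, Finset.mem_univ _⟩
          rcases Finset.mem_insert.1 (hfst p hp.1) with h | h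
          · exact absurd h hp.2
          · exact h
        · ext b
          simp only [Finset.mem_image, Finset.mem_filter]
          constructor
          · rintro ⟨p, ⟨hp, hpa⟩, rfl⟩
            rcases Finset.mem_insert.1 (hfst p hp) with h | h
            · exact absurd h hpa
            · exact h
          · intro hb
            have hbS : b ∈ S.image Prod.fst := hS2 ▸ Finset.mem_insert_of_mem hb
            obtain ⟨p, hp, rfl⟩ := Finset.mem_image.1 hbS
            exact ⟨p, ⟨hp, fun h => ha (h ▸ hb)⟩, rfl⟩
    · -- hj : maps back
      rintro ⟨T, S'⟩ hp
      rw [Finset.mem_product, Finset.mem_erase, Finset.mem_powerset,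
        Finset.mem_filter, Finset.mem_powerset] at hp
      obtain ⟨⟨hT0, -⟩, hS'1, hS'2⟩ := hp
      rw [Finset.mem_filter, Finset.mem_powerset]
      constructor
      · apply Finset.union_subset
        · intro p hp
          rw [Finset.mem_product] at hp ⊢
          exact ⟨Finset.mem_insert.2 (Or.inl (Finset.mem_singleton.1 hp.1)),
            Finset.mem_univ _⟩
        · intro p hp
          have := hS'1 hp
          rw [Finset.mem_product] at this ⊢
          exact ⟨Finset.mem_insert_of_mem this.1, Finset.mem_univ _⟩
      · rw [Finset.image_union, hS'2]
        have himg : (({a} : Finset α) ×ˢ T).image Prod.fst = {a} := by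
          ext b
          simp only [Finset.mem_image, Finset.mem_product, Finset.mem_singleton]
          constructor
          · rintro ⟨p, ⟨h1, -⟩, rfl⟩; exact h1
          · rintro rfl
            obtain ⟨t, ht⟩ := Finset.nonempty_iff_ne_empty.2 hT0
            exact ⟨(b, t), ⟨rfl, ht⟩, rfl⟩
        rw [himg, ← Finset.insert_eq]
    · -- left inverse
      intro S hS
      rw [Finset.mem_filter, Finset.mem_powerset] at hS
      have h1 : ({a} : Finset α) ×ˢ (S.filter (fun p => p.1 = a)).image Prod.snd
          = S.filter (fun p => p.1 = a) := by
        ext ⟨u, v⟩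
        simp only [Finset.mem_product, Finset.mem_singleton, Finset.mem_image,
          Finset.mem_filter]
        constructor
        · rintro ⟨rfl, p, ⟨hp, hpa⟩, rfl⟩
          have : p = (u, p.2) := Prod.ext hpa rfl
          rw [← this]; exact ⟨hp, rfl⟩
        · rintro ⟨huv, rfl⟩
          exact ⟨rfl, (u, v), ⟨huv, rfl⟩, rfl⟩
      simp only
      rw [h1, Finset.filter_union_filter_not_eq]
    · -- right inverse
      rintro ⟨T, S'⟩ hp
      rw [Finset.mem_product, Finset.mem_erase, Finset.mem_powerset,
        Finset.mem_filter, Finset.mem_powerset] at hp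
      obtain ⟨⟨hT0, -⟩, hS'1, hS'2⟩ := hp
      have hS'a : ∀ p ∈ S', p.1 ≠ a := by
        intro p hp hpa
        have := (Finset.mem_product.1 (hS'1 hp)).1
        exact ha (hpa ▸ this)
      have hf1 : ((({a} : Finset α) ×ˢ T) ∪ S').filter (fun p => p.1 = a)
          = ({a} : Finset α) ×ˢ T := by
        rw [Finset.filter_union]
        rw [Finset.filter_true_of_mem, Finset.filter_false_of_mem]
        · rw [Finset.union_empty]
        · exact hS'a
        · intro p hp; exact Finset.mem_singleton.1 (Finset.mem_product.1 hp).1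
      have hf2 : ((({a} : Finset α) ×ˢ T) ∪ S').filter (fun p => p.1 ≠ a) = S' := by
        rw [Finset.filter_union]
        rw [Finset.filter_false_of_mem, Finset.filter_true_of_mem]
        · rw [Finset.empty_union]
        · exact hS'a
        · intro p hp h
          exact h (Finset.mem_singleton.1 (Finset.mem_product.1 hp).1)
      simp only
      rw [hf1, hf2]
      congr 1
      ext t
      simp only [Finset.mem_image, Finset.mem_product, Finset.mem_singleton]
      constructor
      · rintro ⟨p, ⟨-, h2⟩, rfl⟩; exact h2
      · intro ht; exact ⟨(a, t), ⟨rfl, ht⟩, rfl⟩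
    · -- values agree
      intro S hS
      rw [Finset.mem_filter, Finset.mem_powerset] at hS
      obtain ⟨hS1, hS2⟩ := hS
      simp only
      have hcard : (S.filter (fun p => p.1 = a)).card
          + (S.filter (fun p => p.1 ≠ a)).card = S.card :=
        Finset.card_filter_add_card_filter_not _
      have hT : ((S.filter (fun p => p.1 = a)).image Prod.snd).card
          = (S.filter (fun p => p.1 = a)).card := by
        apply Finset.card_image_of_injOn
        intro p hp q hq hpq
        rw [Finset.mem_coe, Finset.mem_filter] at hp hq
        exact Prod.ext (hp.2.trans hq.2.symm) hpq
      have hT1 : 1 ≤ (S.filter (fun p => p.1 = a)).card := by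
        have : a ∈ S.image Prod.fst := hS2 ▸ Finset.mem_insert_self a A
        obtain ⟨p, hp, hpa⟩ := Finset.mem_image.1 this
        exact Finset.card_pos.2 ⟨p, Finset.mem_filter.2 ⟨hp, hpa⟩⟩
      have hS'A : A.card ≤ (S.filter (fun p => p.1 ≠ a)).card := by
        have himg : (S.filter (fun p => p.1 ≠ a)).image Prod.fst = A := by
          ext b
          simp only [Finset.mem_image, Finset.mem_filter]
          constructor
          · rintro ⟨p, ⟨hp, hpa⟩, rfl⟩
            have := (Finset.mem_product.1 (hS1 hp)).1
            rcases Finset.mem_insert.1 this with h | h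
            · exact absurd h hpa
            · exact h
          · intro hb
            have hbS : b ∈ S.image Prod.fst := hS2 ▸ Finset.mem_insert_of_mem hb
            obtain ⟨p, hp, rfl⟩ := Finset.mem_image.1 hbS
            exact ⟨p, ⟨hp, fun h => ha (h ▸ hb)⟩, rfl⟩
        calc A.card = ((S.filter (fun p => p.1 ≠ a)).image Prod.fst).card := by rw [himg]
        _ ≤ _ := Finset.card_image_le
      rw [hT, ← pow_add]
      congr 1
      omega

private lemma matroidRk_eq_ncard_basis' {α : Type*} {M : Matroid α} {S I : Set α}
    (hS : S.Finite) (hI : M.IsBasis' I S) : matroidRk M S = I.ncard := by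
  have hub : ∀ n ∈ {n : ℕ | ∃ J, M.Indep J ∧ J ⊆ S ∧ J.ncard = n}, n ≤ I.ncard := by
    rintro n ⟨J, hJ, hJS, rfl⟩
    obtain ⟨I', hI', hJI'⟩ := hJ.subset_isBasis'_of_subset hJS
    have hcard : I'.encard = I.encard := hI'.encard_eq_encard hI
    calc J.ncard ≤ I'.ncard := Set.ncard_le_ncard hJI' (hS.subset hI'.subset)
    _ = I.ncard := by rw [Set.ncard_def, Set.ncard_def, hcard]
  have hmem : I.ncard ∈ {n : ℕ | ∃ J, M.Indep J ∧ J ⊆ S ∧ J.ncard = n} :=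
    ⟨I, hI.indep, hI.subset, rfl⟩
  exact le_antisymm (csSup_le ⟨_, hmem⟩ hub) (le_csSup ⟨_, hub⟩ hmem)

private lemma matroidRk_le_ncard {α : Type*} {M : Matroid α} {S : Set α} (hS : S.Finite) :
    matroidRk M S ≤ S.ncard := by
  obtain ⟨I, hI⟩ := M.exists_isBasis' S
  rw [matroidRk_eq_ncard_basis' hS hI]
  exact Set.ncard_le_ncard hI.subset hS

private lemma matroidRk_mono {α : Type*} {M : Matroid α} {S T : Set α} (hT : T.Finite)
    (hST : S ⊆ T) : matroidRk M S ≤ matroidRk M T := by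
  obtain ⟨I, hI⟩ := M.exists_isBasis' S
  obtain ⟨J, hJ, hIJ⟩ := hI.indep.subset_isBasis'_of_subset (hI.subset.trans hST)
  rw [matroidRk_eq_ncard_basis' (hT.subset hST) hI, matroidRk_eq_ncard_basis' hT hJ]
  exact Set.ncard_le_ncard hIJ (hT.subset hJ.subset)

private lemma matroidRk_comap {α β : Type*} (M : Matroid α) (f : β → α) (S : Set β) :
    matroidRk (M.comap f) S = matroidRk M (f '' S) := by
  unfold matroidRk
  congr 1
  ext n
  constructor
  · rintro ⟨I, hI, hIS, rfl⟩
    rw [Matroid.comap_indep_iff] at hI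
    exact ⟨f '' I, hI.1, image_mono (f := f) hIS, (Set.ncard_image_of_injOn hI.2).symm ▸ rfl⟩
  · rintro ⟨J, hJ, hJS, rfl⟩
    rcases J.eq_empty_or_nonempty with rfl | ⟨b0, hb0⟩
    · exact ⟨∅, (M.comap f).empty_indep, empty_subset _, by simp⟩
    have : Nonempty β := ⟨(hJS hb0).choose⟩
    set g := Function.invFunOn f S with hg
    have hgJ : ∀ b ∈ J, g b ∈ S ∧ f (g b) = b := by
      intro b hb
      obtain ⟨a, haS, hab⟩ := hJS hb
      exact ⟨Function.invFunOn_mem ⟨a, haS, hab⟩, Function.invFunOn_eq ⟨a, haS, hab⟩⟩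
    refine ⟨g '' J, ?_, ?_, ?_⟩
    · rw [Matroid.comap_indep_iff]
      have himg : f '' (g '' J) = J := by
        ext b; simp only [Set.mem_image]
        constructor
        · rintro ⟨c, ⟨b', hb', rfl⟩, rfl⟩
          rw [(hgJ b' hb').2]; exact hb'
        · intro hb; exact ⟨g b, ⟨b, hb, rfl⟩, (hgJ b hb).2⟩
      constructor
      · rw [himg]; exact hJ
      · rintro c ⟨b1, hb1, rfl⟩ c' ⟨b2, hb2, rfl⟩ h
        rw [(hgJ b1 hb1).2, (hgJ b2 hb2).2] at h
        rw [h]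
    · rintro c ⟨b, hb, rfl⟩; exact (hgJ b hb).1
    · apply Set.ncard_image_of_injOn
      intro b1 hb1 b2 hb2 h
      have := congrArg f h
      rwa [(hgJ b1 hb1).2, (hgJ b2 hb2).2] at this

end Aux

/-- The Tutte polynomial of the `k`-thickening of a matroid `M`:
`T_{M^{(k)}}(x,y) = (y^{k-1} + ⋯ + y + 1)^{r(M)} ·
  T_M((y^{k-1} + ⋯ + y + x)/(y^{k-1} + ⋯ + y + 1), y^k)`. -/
theorem tutte_thicken_formula {α : Type*} (M : Matroid α) (hE : M.E.Finite)
    (k : ℕ) (hk : 1 ≤ k) (x y : ℝ) (hs : ∑ i ∈ Finset.range k, y ^ i ≠ 0) :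
    tutte (thicken M k) (thicken_ground_finite hE k) x y =
      (∑ i ∈ Finset.range k, y ^ i) ^ matroidRk M M.E *
        tutte M hE
          (((∑ i ∈ Finset.Icc 1 (k - 1), y ^ i) + x) / (∑ i ∈ Finset.range k, y ^ i))
          (y ^ k) := by
  classical
  have hk0 : 0 < k := hk
  haveI : Nonempty (Fin k) := ⟨⟨0, hk0⟩⟩
  set s : ℝ := ∑ i ∈ Finset.range k, y ^ i with hs_def
  set F := hE.toFinset with hF
  set R := matroidRk M M.E with hR
  have hG : (thicken_ground_finite hE k).toFinset
      = F ×ˢ (Finset.univ : Finset (Fin k)) := by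
    ext ⟨a, b⟩
    simp [thicken, hF, Matroid.comap_ground_eq]
  have hrk : ∀ S : Set (α × Fin k),
      matroidRk (thicken M k) S = matroidRk M (Prod.fst '' S) := fun S =>
    matroidRk_comap M Prod.fst S
  have hrkE : matroidRk (thicken M k) (thicken M k).E = R := by
    rw [hrk, hR]
    congr 1
    show Prod.fst '' (Prod.fst ⁻¹' M.E) = M.E
    exact Set.image_preimage_eq _ Prod.fst_surjective
  have hIcc : (∑ i ∈ Finset.Icc 1 (k - 1), y ^ i) = s - 1 := by
    have h1 : Finset.Icc 1 (k - 1) = Finset.Ico 1 k := by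
      rw [← Finset.Ico_add_one_right_eq_Icc]
      congr 1
      omega
    rw [h1, hs_def, Finset.range_eq_Ico, Finset.sum_eq_sum_Ico_succ_bot hk0]
    simp
  have hY : y ^ k - 1 = (y - 1) * s := by
    rw [hs_def, mul_comm]
    exact (geom_sum_mul y k).symm
  simp only [tutte]
  rw [hG, hrkE, hIcc]
  have hmaps : ∀ S ∈ (F ×ˢ (Finset.univ : Finset (Fin k))).powerset,
      S.image Prod.fst ∈ F.powerset := by
    intro S hS
    rw [Finset.mem_powerset] at hS ⊢
    intro b hb
    obtain ⟨p, hp, rfl⟩ := Finset.mem_image.1 hb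
    exact (Finset.mem_product.1 (hS hp)).1
  have hL : ∑ S ∈ (F ×ˢ (Finset.univ : Finset (Fin k))).powerset,
      (x - 1) ^ (R - matroidRk (thicken M k) (S : Set (α × Fin k))) *
        (y - 1) ^ (S.card - matroidRk (thicken M k) (S : Set (α × Fin k)))
      = ∑ A ∈ F.powerset,
        (x - 1) ^ (R - matroidRk M (A : Set α)) *
          ((y - 1) ^ (A.card - matroidRk M (A : Set α)) * s ^ A.card) := by
    rw [← Finset.sum_fiberwise_of_maps_to hmaps
      (fun S => (x - 1) ^ (R - matroidRk (thicken M k) (S : Set (α × Fin k))) *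
        (y - 1) ^ (S.card - matroidRk (thicken M k) (S : Set (α × Fin k))))]
    apply Finset.sum_congr rfl
    intro A hA
    have hAF : A ⊆ F := Finset.mem_powerset.1 hA
    have hAE : (A : Set α) ⊆ M.E := by
      rw [← hE.coe_toFinset]
      exact Finset.coe_subset.2 hAF
    have hrAc : matroidRk M (A : Set α) ≤ A.card := by
      have := matroidRk_le_ncard (M := M) (A : Set α).toFinite
      rwa [Set.ncard_coe_finset] at this
    have hrAR : matroidRk M (A : Set α) ≤ R := matroidRk_mono hE hAE
    have hfe : (F ×ˢ (Finset.univ : Finset (Fin k))).powerset.filter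
          (fun S => S.image Prod.fst = A)
        = (A ×ˢ (Finset.univ : Finset (Fin k))).powerset.filter
          (fun S => S.image Prod.fst = A) := by
      ext S
      simp only [Finset.mem_filter, Finset.mem_powerset]
      constructor
      · rintro ⟨hSsub, him⟩
        refine ⟨?_, him⟩
        intro p hp
        exact Finset.mem_product.2
          ⟨him ▸ Finset.mem_image_of_mem Prod.fst hp, Finset.mem_univ _⟩
      · rintro ⟨hSsub, him⟩
        exact ⟨hSsub.trans (Finset.product_subset_product_left hAF), him⟩
    rw [hfe]
    have hterm : ∀ S ∈ (A ×ˢ (Finset.univ : Finset (Fin k))).powerset.filter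
          (fun S => S.image Prod.fst = A),
        (x - 1) ^ (R - matroidRk (thicken M k) (S : Set (α × Fin k))) *
          (y - 1) ^ (S.card - matroidRk (thicken M k) (S : Set (α × Fin k)))
        = (x - 1) ^ (R - matroidRk M (A : Set α)) *
            ((y - 1) ^ (A.card - matroidRk M (A : Set α)) *
              (y - 1) ^ (S.card - A.card)) := by
      intro S hS
      rw [Finset.mem_filter] at hS
      have him := hS.2
      have hrkS : matroidRk (thicken M k) (S : Set (α × Fin k))
          = matroidRk M (A : Set α) := by
        rw [hrk, ← Finset.coe_image, him]
      have hcS : A.card ≤ S.card := him ▸ Finset.card_image_le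
      have hexp : S.card - matroidRk M (A : Set α)
          = (A.card - matroidRk M (A : Set α)) + (S.card - A.card) := by omega
      rw [hrkS, hexp, pow_add]
    rw [Finset.sum_congr rfl hterm, ← Finset.mul_sum, ← Finset.mul_sum,
      tutte_keysum, tutte_geomlemma, Finset.card_univ, Fintype.card_fin]
  rw [hL, Finset.mul_sum]
  apply Finset.sum_congr rfl
  intro A hA
  have hAF : A ⊆ F := Finset.mem_powerset.1 hA
  have hAE : (A : Set α) ⊆ M.E := by
    rw [← hE.coe_toFinset]
    exact Finset.coe_subset.2 hAF
  have hrAc : matroidRk M (A : Set α) ≤ A.card := by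
    have := matroidRk_le_ncard (M := M) (A : Set α).toFinite
    rwa [Set.ncard_coe_finset] at this
  have hrAR : matroidRk M (A : Set α) ≤ R := matroidRk_mono hE hAE
  have hX : (s - 1 + x) / s - 1 = (x - 1) / s := by
    field_simp
    ring
  rw [hX, hY, div_pow, mul_pow]
  set rA := matroidRk M (A : Set α) with hrA
  have hss : s ^ A.card * s ^ (R - rA) = s ^ R * s ^ (A.card - rA) := by
    rw [← pow_add, ← pow_add]
    congr 1
    omega
  apply mul_right_cancel₀ (pow_ne_zero (R - rA) hs)
  field_simp
  linear_combination ((x - 1) ^ (R - rA) * (y - 1) ^ (A.card - rA)) * hss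
end

section
/- Let p < q be positive integers, set α = p/q, and let x be a real number with x ≥ 1/α = q/p. Then lim_{k→∞} (1/(qk)) · log T_{U_{qk,pk}}(x,0) = log( x·(x−1)^{α−1} ). -/
open Set

lemma unif_indep (n r : ℕ) (I : Set (Fin n)) : (unif n r).Indep I ↔ I.ncard ≤ r := by
  simp [unif]

lemma unif_E (n r : ℕ) : (unif n r).E = Set.univ := rfl

lemma matroidRk_unif (n r : ℕ) (S : Set (Fin n)) :
    matroidRk (unif n r) S = min S.ncard r := by
  have hset : {m : ℕ | ∃ I, (unif n r).Indep I ∧ I ⊆ S ∧ I.ncard = m}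
      = Set.Iic (min S.ncard r) := by
    ext m
    simp only [unif_indep, Set.mem_setOf_eq, Set.mem_Iic, le_min_iff]
    constructor
    · rintro ⟨I, hIr, hIS, rfl⟩
      exact ⟨Set.ncard_le_ncard hIS S.toFinite, hIr⟩
    · rintro ⟨h1, h2⟩
      obtain ⟨I, hIS, hI⟩ := Set.exists_subset_card_eq h1
      exact ⟨I, by rw [hI]; exact h2, hIS, hI⟩
  rw [matroidRk, hset, csSup_Iic]

lemma tutte_unif (n r : ℕ) (hrn : r ≤ n) (h : (unif n r).E.Finite) (x : ℝ) :
    tutte (unif n r) h x 0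
      = ∑ s ∈ Finset.range (n + 1),
          (n.choose s : ℝ) * ((x - 1) ^ (r - s) * (-1 : ℝ) ^ (s - r)) := by
  have hT : h.toFinset = Finset.univ := by
    simp [unif_E]
  have hground : matroidRk (unif n r) (unif n r).E = r := by
    rw [unif_E, matroidRk_unif, Set.ncard_univ, Nat.card_eq_fintype_card, Fintype.card_fin]
    omega
  have hterm : ∀ S : Finset (Fin n),
      (x - 1) ^ (matroidRk (unif n r) (unif n r).E - matroidRk (unif n r) (S : Set (Fin n))) *
        ((0:ℝ) - 1) ^ (S.card - matroidRk (unif n r) (S : Set (Fin n)))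
      = (x - 1) ^ (r - S.card) * (-1 : ℝ) ^ (S.card - r) := by
    intro S
    rw [hground, matroidRk_unif, Set.ncard_coe_finset]
    have h1 : r - min S.card r = r - S.card := by omega
    have h2 : S.card - min S.card r = S.card - r := by omega
    rw [h1, h2]
    norm_num
  rw [tutte]
  rw [Finset.sum_congr rfl (fun S _ => hterm S)]
  rw [hT]
  rw [Finset.sum_powerset_apply_card (fun s => (x - 1) ^ (r - s) * (-1 : ℝ) ^ (s - r))]
  simp [Finset.card_univ, nsmul_eq_mul]

lemma alt_partial (N : ℕ) : ∀ m : ℕ,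
    ∑ s ∈ Finset.range (m + 1), (-1 : ℝ) ^ s * ((N + 1).choose s : ℝ)
      = (-1 : ℝ) ^ m * (N.choose m : ℝ) := by
  intro m
  induction m with
  | zero => simp
  | succ m ih =>
    rw [Finset.sum_range_succ, ih, Nat.choose_succ_succ' N m]
    push_cast
    ring

lemma choose_decay (n r : ℕ) : ∀ j : ℕ,
    n.choose (r + j) * r ^ j ≤ n.choose r * (n - r) ^ j := by
  intro j
  induction j with
  | zero => simp
  | succ j ih =>
    have key : n.choose (r + j + 1) * r ≤ n.choose (r + j) * (n - r) := by
      calc n.choose (r + j + 1) * r ≤ n.choose (r + j + 1) * (r + j + 1) :=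
            Nat.mul_le_mul_left _ (by omega)
        _ = n.choose (r + j) * (n - (r + j)) := Nat.choose_succ_right_eq n (r + j)
        _ ≤ n.choose (r + j) * (n - r) := Nat.mul_le_mul_left _ (by omega)
    calc n.choose (r + (j + 1)) * r ^ (j + 1)
        = (n.choose (r + j + 1) * r) * r ^ j := by ring_nf
      _ ≤ (n.choose (r + j) * (n - r)) * r ^ j := Nat.mul_le_mul_right _ key
      _ = (n.choose (r + j) * r ^ j) * (n - r) := by ring
      _ ≤ (n.choose r * (n - r) ^ j) * (n - r) := Nat.mul_le_mul_right _ ih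
      _ = n.choose r * (n - r) ^ (j + 1) := by ring

lemma choose_half (n r : ℕ) (hr : 1 ≤ r) (hrn : r + 1 ≤ n) :
    n.choose r * r ≤ 2 * (n.choose (r - 1) * (n - r)) := by
  have h := Nat.choose_succ_right_eq n (r - 1)
  rw [Nat.sub_add_cancel hr] at h
  have : n - (r - 1) = (n - r) + 1 := by omega
  rw [this] at h
  calc n.choose r * r = n.choose (r - 1) * (n - r) + n.choose (r - 1) := by rw [h]; ring
    _ ≤ 2 * (n.choose (r - 1) * (n - r)) := by
        have : n.choose (r - 1) ≤ n.choose (r - 1) * (n - r) :=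
          Nat.le_mul_of_pos_right _ (by omega)
        omega

lemma tutte_split (n r : ℕ) (hr : 1 ≤ r) (hrn : r + 1 ≤ n) (x : ℝ) :
    ∑ s ∈ Finset.range (n + 1),
        (n.choose s : ℝ) * ((x - 1) ^ (r - s) * (-1 : ℝ) ^ (s - r))
      = (∑ s ∈ Finset.range (r + 1), (n.choose s : ℝ) * (x - 1) ^ (r - s))
          - ((n - 1).choose r : ℝ) := by
  have hsplit : ∑ s ∈ Finset.range (n + 1),
        (n.choose s : ℝ) * ((x - 1) ^ (r - s) * (-1 : ℝ) ^ (s - r))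
      = (∑ s ∈ Finset.Ico 0 (r + 1),
          (n.choose s : ℝ) * ((x - 1) ^ (r - s) * (-1 : ℝ) ^ (s - r)))
        + ∑ s ∈ Finset.Ico (r + 1) (n + 1),
            (n.choose s : ℝ) * ((x - 1) ^ (r - s) * (-1 : ℝ) ^ (s - r)) := by
    rw [Finset.sum_Ico_consecutive _ (by omega) (by omega), Finset.range_eq_Ico]
  rw [hsplit]
  have h1 : ∑ s ∈ Finset.Ico 0 (r + 1),
        (n.choose s : ℝ) * ((x - 1) ^ (r - s) * (-1 : ℝ) ^ (s - r))
      = ∑ s ∈ Finset.range (r + 1), (n.choose s : ℝ) * (x - 1) ^ (r - s) := by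
    rw [← Finset.range_eq_Ico]
    refine Finset.sum_congr rfl fun s hs => ?_
    rw [Finset.mem_range] at hs
    rw [show s - r = 0 by omega, pow_zero, mul_one]
  have h2 : ∑ s ∈ Finset.Ico (r + 1) (n + 1),
        (n.choose s : ℝ) * ((x - 1) ^ (r - s) * (-1 : ℝ) ^ (s - r))
      = -(((n - 1).choose r : ℝ)) := by
    have e1 : ∀ s ∈ Finset.Ico (r + 1) (n + 1),
        (n.choose s : ℝ) * ((x - 1) ^ (r - s) * (-1 : ℝ) ^ (s - r))
          = (-1 : ℝ) ^ r * ((-1 : ℝ) ^ s * (n.choose s : ℝ)) := by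
      intro s hs
      rw [Finset.mem_Ico] at hs
      have hsr : r ≤ s := by omega
      have : (-1 : ℝ) ^ (s - r) * (-1 : ℝ) ^ r = (-1 : ℝ) ^ s := by
        rw [← pow_add, Nat.sub_add_cancel hsr]
      have hinv : ((-1 : ℝ) ^ r) * ((-1 : ℝ) ^ r) = 1 := by
        rw [← pow_add, Even.neg_one_pow ⟨r, rfl⟩]
      have h3 : (-1 : ℝ) ^ (s - r) = (-1 : ℝ) ^ s * (-1 : ℝ) ^ r := by
        calc (-1 : ℝ) ^ (s - r) = (-1 : ℝ) ^ (s - r) * ((-1 : ℝ) ^ r * (-1 : ℝ) ^ r) := by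
              rw [hinv, mul_one]
          _ = ((-1 : ℝ) ^ (s - r) * (-1 : ℝ) ^ r) * (-1 : ℝ) ^ r := by ring
          _ = (-1 : ℝ) ^ s * (-1 : ℝ) ^ r := by rw [this]
      rw [show r - s = 0 by omega, pow_zero, one_mul, h3]
      ring
    rw [Finset.sum_congr rfl e1, ← Finset.mul_sum]
    have hIco : ∑ s ∈ Finset.Ico (r + 1) (n + 1), (-1 : ℝ) ^ s * (n.choose s : ℝ)
        = (∑ s ∈ Finset.range (n + 1), (-1 : ℝ) ^ s * (n.choose s : ℝ))
          - ∑ s ∈ Finset.range (r + 1), (-1 : ℝ) ^ s * (n.choose s : ℝ) := by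
      rw [eq_sub_iff_add_eq, Finset.range_eq_Ico, add_comm,
        Finset.sum_Ico_consecutive _ (by omega) (by omega), ← Finset.range_eq_Ico]
    have hn1 : n - 1 + 1 = n := by omega
    have hfull : ∑ s ∈ Finset.range (n + 1), (-1 : ℝ) ^ s * (n.choose s : ℝ) = 0 := by
      have := alt_partial (n - 1) n
      rw [hn1] at this
      rw [this, Nat.choose_eq_zero_of_lt (by omega)]
      simp
    have hpart : ∑ s ∈ Finset.range (r + 1), (-1 : ℝ) ^ s * (n.choose s : ℝ)
        = (-1 : ℝ) ^ r * ((n - 1).choose r : ℝ) := by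
      have := alt_partial (n - 1) r
      rwa [hn1] at this
    rw [hIco, hfull, hpart]
    have hinv : ((-1 : ℝ) ^ r) * ((-1 : ℝ) ^ r) = 1 := by
      rw [← pow_add, Even.neg_one_pow ⟨r, rfl⟩]
    linear_combination (-(((n - 1).choose r : ℝ))) * hinv
  rw [h1, h2]
  ring

lemma A_pow_eq (n r : ℕ) (hrn : r ≤ n) (x : ℝ) :
    (∑ s ∈ Finset.range (r + 1), (n.choose s : ℝ) * (x - 1) ^ (r - s)) * (x - 1) ^ (n - r)
      = ∑ s ∈ Finset.range (r + 1), (n.choose s : ℝ) * (x - 1) ^ (n - s) := by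
  rw [Finset.sum_mul]
  refine Finset.sum_congr rfl fun s hs => ?_
  rw [Finset.mem_range] at hs
  rw [mul_assoc, ← pow_add]
  congr 2
  omega

lemma full_binom (n : ℕ) (x : ℝ) :
    x ^ n = ∑ s ∈ Finset.range (n + 1), (n.choose s : ℝ) * (x - 1) ^ (n - s) := by
  have h := add_pow (1 : ℝ) (x - 1) n
  have : (1 : ℝ) + (x - 1) = x := by ring
  rw [this] at h
  rw [h]
  refine Finset.sum_congr rfl fun s _ => ?_
  rw [one_pow, one_mul, mul_comm]

lemma A_upper (n r : ℕ) (hrn : r ≤ n) (x : ℝ) (hx1 : 0 ≤ x - 1) :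
    (∑ s ∈ Finset.range (r + 1), (n.choose s : ℝ) * (x - 1) ^ (r - s)) * (x - 1) ^ (n - r)
      ≤ x ^ n := by
  rw [A_pow_eq n r hrn x, full_binom n x]
  refine Finset.sum_le_sum_of_subset_of_nonneg (Finset.range_subset_range.2 (by omega))
    fun i _ _ => by positivity

lemma term_bound (n r s : ℕ) (hr : 1 ≤ r) (hs : r ≤ s) (hsn : s ≤ n) (x : ℝ)
    (hxr : ((n : ℝ) - r) / r ≤ x - 1) :
    (n.choose s : ℝ) * (x - 1) ^ (n - s) ≤ (n.choose r : ℝ) * (x - 1) ^ (n - r) := by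
  have hrpos : (0 : ℝ) < r := by exact_mod_cast (by omega : 0 < r)
  have hx0 : (0 : ℝ) ≤ x - 1 := le_trans (div_nonneg (by
    have : (r : ℝ) ≤ n := by exact_mod_cast (by omega : r ≤ n)
    linarith) hrpos.le) hxr
  set j := s - r with hj
  have hsj : s = r + j := by omega
  have hnat := choose_decay n r j
  have hcast : ((n.choose s : ℝ)) * (r : ℝ) ^ j ≤ (n.choose r : ℝ) * ((n - r : ℕ) : ℝ) ^ j := by
    rw [hsj]
    exact_mod_cast hnat
  have hnr : (((n - r : ℕ)) : ℝ) = (n : ℝ) - r := by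
    push_cast [Nat.cast_sub (by omega : r ≤ n)]
    ring
  have h1 : (n.choose s : ℝ) ≤ (n.choose r : ℝ) * (((n : ℝ) - r) / r) ^ j := by
    rw [div_pow, ← mul_div_assoc, le_div_iff₀ (pow_pos hrpos j)]
    calc (n.choose s : ℝ) * (r : ℝ) ^ j ≤ (n.choose r : ℝ) * ((n - r : ℕ) : ℝ) ^ j := hcast
      _ = (n.choose r : ℝ) * ((n : ℝ) - r) ^ j := by rw [hnr]
  have h2 : (n.choose s : ℝ) ≤ (n.choose r : ℝ) * (x - 1) ^ j := by
    refine le_trans h1 ?_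
    have hd0 : (0 : ℝ) ≤ ((n : ℝ) - r) / r := div_nonneg (by
      have : (r : ℝ) ≤ n := by exact_mod_cast (by omega : r ≤ n)
      linarith) hrpos.le
    have : (((n : ℝ) - r) / r) ^ j ≤ (x - 1) ^ j := pow_le_pow_left₀ hd0 hxr j
    nlinarith [(Nat.cast_nonneg (n.choose r) : (0:ℝ) ≤ (n.choose r : ℝ))]
  calc (n.choose s : ℝ) * (x - 1) ^ (n - s)
      ≤ ((n.choose r : ℝ) * (x - 1) ^ j) * (x - 1) ^ (n - s) := by
        exact mul_le_mul_of_nonneg_right h2 (by positivity)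
    _ = (n.choose r : ℝ) * (x - 1) ^ (j + (n - s)) := by rw [mul_assoc, pow_add]
    _ = (n.choose r : ℝ) * (x - 1) ^ (n - r) := by congr 2; omega

lemma choose_le_A (n r s : ℕ) (hs : s ≤ r) (x : ℝ) (hx0 : 0 ≤ x - 1) :
    (n.choose s : ℝ) * (x - 1) ^ (r - s)
      ≤ ∑ t ∈ Finset.range (r + 1), (n.choose t : ℝ) * (x - 1) ^ (r - t) :=
  Finset.single_le_sum (f := fun t => (n.choose t : ℝ) * (x - 1) ^ (r - t))
    (fun i _ => by positivity) (Finset.mem_range.2 (by omega))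

lemma A_lower (n r : ℕ) (hr : 1 ≤ r) (hrn : r + 1 ≤ n) (x : ℝ)
    (hxr : ((n : ℝ) - r) / r ≤ x - 1) :
    x ^ n ≤ ((n : ℝ) + 1) *
      ((∑ s ∈ Finset.range (r + 1), (n.choose s : ℝ) * (x - 1) ^ (r - s)) * (x - 1) ^ (n - r)) := by
  have hrpos : (0 : ℝ) < r := by exact_mod_cast (by omega : 0 < r)
  have hx0 : (0 : ℝ) ≤ x - 1 := le_trans (div_nonneg (by
    have : (r : ℝ) ≤ n := by exact_mod_cast (by omega : r ≤ n)
    linarith) hrpos.le) hxr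
  set B := (∑ s ∈ Finset.range (r + 1), (n.choose s : ℝ) * (x - 1) ^ (r - s)) * (x - 1) ^ (n - r)
    with hB
  have hterm : ∀ s ∈ Finset.range (n + 1), (n.choose s : ℝ) * (x - 1) ^ (n - s) ≤ B := by
    intro s hsmem
    rw [Finset.mem_range] at hsmem
    rcases le_or_gt s r with hsr | hsr
    · rw [hB, A_pow_eq n r (by omega) x]
      exact Finset.single_le_sum (f := fun t => (n.choose t : ℝ) * (x - 1) ^ (n - t))
        (fun i _ => by positivity) (Finset.mem_range.2 (by omega))
    · refine le_trans (term_bound n r s hr (by omega) (by omega) x hxr) ?_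
      rw [hB, A_pow_eq n r (by omega) x]
      exact Finset.single_le_sum (f := fun t => (n.choose t : ℝ) * (x - 1) ^ (n - t))
        (fun i _ => by positivity) (Finset.mem_range.2 (by omega))
  calc x ^ n = ∑ s ∈ Finset.range (n + 1), (n.choose s : ℝ) * (x - 1) ^ (n - s) := full_binom n x
    _ ≤ ∑ _s ∈ Finset.range (n + 1), B := Finset.sum_le_sum hterm
    _ = ((n : ℝ) + 1) * B := by
        rw [Finset.sum_const, Finset.card_range, nsmul_eq_mul]
        push_cast
        ring

lemma A_ge (n r : ℕ) (hr : 1 ≤ r) (hrn : r + 1 ≤ n) (x : ℝ)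
    (hxr : ((n : ℝ) - r) / r ≤ x - 1) :
    3 * (n.choose r : ℝ) ≤ 2 * ∑ s ∈ Finset.range (r + 1), (n.choose s : ℝ) * (x - 1) ^ (r - s) := by
  have hrpos : (0 : ℝ) < r := by exact_mod_cast (by omega : 0 < r)
  have hx0 : (0 : ℝ) ≤ x - 1 := le_trans (div_nonneg (by
    have : (r : ℝ) ≤ n := by exact_mod_cast (by omega : r ≤ n)
    linarith) hrpos.le) hxr
  have hpair : ({r - 1, r} : Finset ℕ) ⊆ Finset.range (r + 1) := by
    intro t ht
    simp only [Finset.mem_insert, Finset.mem_singleton] at ht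
    rw [Finset.mem_range]
    omega
  have hA1 : (n.choose (r - 1) : ℝ) * (x - 1) ^ (r - (r - 1))
        + (n.choose r : ℝ) * (x - 1) ^ (r - r)
      ≤ ∑ s ∈ Finset.range (r + 1), (n.choose s : ℝ) * (x - 1) ^ (r - s) := by
    have h := Finset.sum_le_sum_of_subset_of_nonneg hpair
      (f := fun s => (n.choose s : ℝ) * (x - 1) ^ (r - s)) (fun i _ _ => by positivity)
    rwa [Finset.sum_pair (show r - 1 ≠ r by omega)] at h
  rw [show r - (r - 1) = 1 by omega, Nat.sub_self, pow_one, pow_zero, mul_one] at hA1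
  have hhalf : (n.choose r : ℝ) * r ≤ 2 * ((n.choose (r - 1) : ℝ) * ((n : ℝ) - r)) := by
    have h := choose_half n r hr hrn
    have : ((n.choose r * r : ℕ) : ℝ) ≤ ((2 * (n.choose (r - 1) * (n - r)) : ℕ) : ℝ) := by
      exact_mod_cast h
    push_cast [Nat.cast_sub (by omega : r ≤ n)] at this
    linarith
  have hkey : (n.choose r : ℝ) ≤ 2 * ((n.choose (r - 1) : ℝ) * (x - 1)) := by
    have h1 : (n.choose (r - 1) : ℝ) * (((n : ℝ) - r) / r) ≤ (n.choose (r - 1) : ℝ) * (x - 1) :=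
      mul_le_mul_of_nonneg_left hxr (Nat.cast_nonneg _)
    have h1' : (n.choose (r - 1) : ℝ) * ((n : ℝ) - r)
        ≤ (n.choose (r - 1) : ℝ) * (x - 1) * r := by
      have h := mul_le_mul_of_nonneg_right h1 hrpos.le
      rwa [mul_assoc, div_mul_cancel₀ _ (ne_of_gt hrpos)] at h
    nlinarith [hhalf, h1', hrpos]
  linarith

lemma T_sandwich (n r : ℕ) (hr : 1 ≤ r) (hrn : r + 1 ≤ n) (x : ℝ)
    (hxr : ((n : ℝ) - r) / r ≤ x - 1) :
    0 < (∑ s ∈ Finset.range (r + 1), (n.choose s : ℝ) * (x - 1) ^ (r - s))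
          - ((n - 1).choose r : ℝ)
    ∧ ((∑ s ∈ Finset.range (r + 1), (n.choose s : ℝ) * (x - 1) ^ (r - s))
          - ((n - 1).choose r : ℝ)) * (x - 1) ^ (n - r) ≤ x ^ n
    ∧ x ^ n ≤ (3 * ((n : ℝ) + 1)) *
        (((∑ s ∈ Finset.range (r + 1), (n.choose s : ℝ) * (x - 1) ^ (r - s))
          - ((n - 1).choose r : ℝ)) * (x - 1) ^ (n - r)) := by
  have hrpos : (0 : ℝ) < r := by exact_mod_cast (by omega : 0 < r)
  have hx0 : (0 : ℝ) ≤ x - 1 := le_trans (div_nonneg (by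
    have : (r : ℝ) ≤ n := by exact_mod_cast (by omega : r ≤ n)
    linarith) hrpos.le) hxr
  set A := ∑ s ∈ Finset.range (r + 1), (n.choose s : ℝ) * (x - 1) ^ (r - s) with hA
  have hC1 : ((n - 1).choose r : ℝ) ≤ (n.choose r : ℝ) := by
    exact_mod_cast Nat.choose_le_choose r (by omega : n - 1 ≤ n)
  have hCA : (n.choose r : ℝ) ≤ A := by
    have := choose_le_A n r r (le_refl r) x hx0
    rwa [Nat.sub_self, pow_zero, mul_one] at this
  have hCpos : (0 : ℝ) < (n.choose r : ℝ) := by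
    exact_mod_cast Nat.choose_pos (by omega : r ≤ n)
  have hge := A_ge n r hr hrn x hxr
  have hTpos : 0 < A - ((n - 1).choose r : ℝ) := by linarith
  have hA3 : A ≤ 3 * (A - ((n - 1).choose r : ℝ)) := by linarith
  have hTA : A - ((n - 1).choose r : ℝ) ≤ A := by linarith
  refine ⟨hTpos, ?_, ?_⟩
  · calc (A - ((n - 1).choose r : ℝ)) * (x - 1) ^ (n - r)
        ≤ A * (x - 1) ^ (n - r) := mul_le_mul_of_nonneg_right hTA (by positivity)
      _ ≤ x ^ n := A_upper n r (by omega) x hx0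
  · calc x ^ n ≤ ((n : ℝ) + 1) * (A * (x - 1) ^ (n - r)) := A_lower n r hr hrn x hxr
      _ ≤ ((n : ℝ) + 1) * ((3 * (A - ((n - 1).choose r : ℝ))) * (x - 1) ^ (n - r)) := by
          refine mul_le_mul_of_nonneg_left
            (mul_le_mul_of_nonneg_right hA3 (by positivity)) (by positivity)
      _ = (3 * ((n : ℝ) + 1)) * ((A - ((n - 1).choose r : ℝ)) * (x - 1) ^ (n - r)) := by ring

lemma log_lim (q : ℕ) (hq : 0 < q) :
    Filter.Tendsto (fun k : ℕ => Real.log (3 * ((q : ℝ) * k + 1)) / ((q : ℝ) * k))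
      Filter.atTop (nhds 0) := by
  have hq' : (0 : ℝ) < q := by exact_mod_cast hq
  have t1 : Filter.Tendsto (fun k : ℕ => (q : ℝ) * k) Filter.atTop Filter.atTop := by
    exact (Filter.Tendsto.const_mul_atTop hq' tendsto_natCast_atTop_atTop)
  have hlog : Filter.Tendsto (fun k : ℕ => Real.log ((q : ℝ) * k) / ((q : ℝ) * k))
      Filter.atTop (nhds 0) :=
    (Real.isLittleO_log_id_atTop.tendsto_div_nhds_zero).comp t1
  have hconst : Filter.Tendsto (fun k : ℕ => Real.log 6 / ((q : ℝ) * k))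
      Filter.atTop (nhds 0) := Filter.Tendsto.div_atTop tendsto_const_nhds t1
  have hsum : Filter.Tendsto
      (fun k : ℕ => Real.log 6 / ((q : ℝ) * k) + Real.log ((q : ℝ) * k) / ((q : ℝ) * k))
      Filter.atTop (nhds 0) := by
    have := hconst.add hlog
    rwa [add_zero] at this
  refine squeeze_zero' ?_ ?_ hsum
  · filter_upwards [Filter.eventually_ge_atTop 1] with k hk
    have hk' : (1 : ℝ) ≤ (q : ℝ) * k := by
      have h1 : (1 : ℝ) ≤ (k : ℝ) := by exact_mod_cast hk
      have h2 : (1 : ℝ) ≤ (q : ℝ) := by exact_mod_cast hq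
      nlinarith
    apply div_nonneg _ (by linarith)
    apply Real.log_nonneg
    linarith
  · filter_upwards [Filter.eventually_ge_atTop 1] with k hk
    have hk' : (1 : ℝ) ≤ (q : ℝ) * k := by
      have h1 : (1 : ℝ) ≤ (k : ℝ) := by exact_mod_cast hk
      have h2 : (1 : ℝ) ≤ (q : ℝ) := by exact_mod_cast hq
      nlinarith
    rw [← add_div]
    have hle : Real.log (3 * ((q : ℝ) * k + 1)) ≤ Real.log 6 + Real.log ((q : ℝ) * k) := by
      rw [← Real.log_mul (by norm_num) (by linarith)]
      exact Real.log_le_log (by linarith) (by nlinarith)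
    gcongr

/-- Exponential growth rate of `T_{U_{n,αn}}(x,0)` for `x ≥ 1/α`, where `α = p/q`:
the limit of `(1/(qk)) log T_{U_{qk,pk}}(x,0)` is `log (x (x-1)^{α-1})`. -/
theorem tutte_unif_growth_dense (p q : ℕ) (hp : 0 < p) (hpq : p < q)
    (x : ℝ) (hx : (q : ℝ) / p ≤ x) :
    Filter.Tendsto
      (fun k : ℕ => 1 / ((q : ℝ) * k) *
        Real.log (tutte (unif (q * k) (p * k)) (Set.toFinite _) x 0))
      Filter.atTop
      (nhds (Real.log (x * (x - 1) ^ ((p : ℝ) / q - 1)))) := by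
  have hq : 0 < q := lt_trans hp hpq
  have hp' : (0 : ℝ) < p := by exact_mod_cast hp
  have hq' : (0 : ℝ) < q := by exact_mod_cast hq
  have hqp1 : (1 : ℝ) < (q : ℝ) / p := by
    rw [lt_div_iff₀ hp', one_mul]
    exact_mod_cast hpq
  have hx1 : 1 < x := lt_of_lt_of_le hqp1 hx
  have hx0 : (0 : ℝ) < x := by linarith
  have hxm1 : (0 : ℝ) < x - 1 := by linarith
  set c := Real.log x + ((p : ℝ) / q - 1) * Real.log (x - 1) with hc
  have hRHS : Real.log (x * (x - 1) ^ ((p : ℝ) / q - 1)) = c := by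
    rw [Real.log_mul (ne_of_gt hx0) (ne_of_gt (Real.rpow_pos_of_pos hxm1 _)),
      Real.log_rpow hxm1]
  rw [hRHS]
  have hbound : ∀ k : ℕ, 1 ≤ k →
      c - Real.log (3 * ((q : ℝ) * k + 1)) / ((q : ℝ) * k)
        ≤ 1 / ((q : ℝ) * k) *
            Real.log (tutte (unif (q * k) (p * k)) (Set.toFinite _) x 0)
      ∧ 1 / ((q : ℝ) * k) *
            Real.log (tutte (unif (q * k) (p * k)) (Set.toFinite _) x 0) ≤ c := by
    intro k hk
    set n := q * k with hn
    set r := p * k with hrdef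
    have hk0 : 0 < k := hk
    have hr : 1 ≤ r := Nat.one_le_iff_ne_zero.2 (by positivity)
    have hrn : r + 1 ≤ n := by
      have : p * k < q * k := (Nat.mul_lt_mul_right hk0).mpr hpq
      omega
    have hk' : (0 : ℝ) < (k : ℝ) := by exact_mod_cast hk0
    have hqk : (0 : ℝ) < (q : ℝ) * k := by positivity
    have hxr : ((n : ℝ) - r) / r ≤ x - 1 := by
      have heq : ((n : ℝ) - r) / r = (q : ℝ) / p - 1 := by
        rw [hn, hrdef]
        push_cast
        field_simp
      rw [heq]
      linarith
    have hval : tutte (unif n r) (Set.toFinite _) x 0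
        = (∑ s ∈ Finset.range (r + 1), (n.choose s : ℝ) * (x - 1) ^ (r - s))
            - ((n - 1).choose r : ℝ) := by
      rw [tutte_unif n r (by omega) _ x, tutte_split n r hr hrn x]
    obtain ⟨hTpos, hub, hlb⟩ := T_sandwich n r hr hrn x hxr
    set T := (∑ s ∈ Finset.range (r + 1), (n.choose s : ℝ) * (x - 1) ^ (r - s))
        - ((n - 1).choose r : ℝ) with hT
    have hlogub : Real.log T + ((n - r : ℕ) : ℝ) * Real.log (x - 1)
        ≤ (n : ℝ) * Real.log x := by
      have h := Real.log_le_log (by positivity) hub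
      rwa [Real.log_mul (ne_of_gt hTpos) (by positivity), Real.log_pow, Real.log_pow] at h
    have hloglb : (n : ℝ) * Real.log x
        ≤ Real.log (3 * ((n : ℝ) + 1))
            + (Real.log T + ((n - r : ℕ) : ℝ) * Real.log (x - 1)) := by
      have h := Real.log_le_log (by positivity) hlb
      rwa [Real.log_pow, Real.log_mul (by positivity) (by positivity),
        Real.log_mul (ne_of_gt hTpos) (by positivity), Real.log_pow] at h
    have hnk : ((n : ℕ) : ℝ) = (q : ℝ) * k := by rw [hn]; push_cast; ring
    have hnrk : (((n - r : ℕ)) : ℝ) = (q : ℝ) * k - (p : ℝ) * k := by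
      have hle : r ≤ n := by omega
      rw [Nat.cast_sub hle, hn, hrdef]
      push_cast
      ring
    have hceq : c * ((q : ℝ) * k)
        = ((q : ℝ) * k) * Real.log x - ((q : ℝ) * k - (p : ℝ) * k) * Real.log (x - 1) := by
      rw [hc]
      field_simp
      ring
    rw [hval]
    constructor
    · have h1 : c * ((q : ℝ) * k) - Real.log (3 * ((q : ℝ) * k + 1)) ≤ Real.log T := by
        rw [hceq]
        rw [hnk, hnrk] at hloglb
        linarith
      have h2 : c - Real.log (3 * ((q : ℝ) * k + 1)) / ((q : ℝ) * k)
          = (c * ((q : ℝ) * k) - Real.log (3 * ((q : ℝ) * k + 1))) / ((q : ℝ) * k) := by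
        field_simp
      rw [h2, one_div, inv_mul_eq_div]
      exact div_le_div_of_nonneg_right h1 hqk.le
    · have h1 : Real.log T ≤ c * ((q : ℝ) * k) := by
        rw [hceq]
        rw [hnk, hnrk] at hlogub
        linarith
      have h2 : c = (c * ((q : ℝ) * k)) / ((q : ℝ) * k) := by field_simp
      rw [one_div, inv_mul_eq_div, h2]
      exact div_le_div_of_nonneg_right h1 hqk.le
  have hlo : Filter.Tendsto
      (fun k : ℕ => c - Real.log (3 * ((q : ℝ) * k + 1)) / ((q : ℝ) * k))
      Filter.atTop (nhds c) := by
    have := (tendsto_const_nhds (x := c) (f := Filter.atTop (α := ℕ))).sub (log_lim q hq)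
    rwa [sub_zero] at this
  refine tendsto_of_tendsto_of_tendsto_of_le_of_le' hlo tendsto_const_nhds ?_ ?_
  · filter_upwards [Filter.eventually_ge_atTop 1] with k hk
    exact (hbound k hk).1
  · filter_upwards [Filter.eventually_ge_atTop 1] with k hk
    exact (hbound k hk).2
end
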